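/- arXiv:2604.20024 — 2 statements merged into one kernel-verified Lean document; each statement's English description precedes it below -/
import Mathlib

section
/- Let d ≥ 1, β > 0, and ε ∈ (0, 1), and set α = 2β√d/ε. Let z¹, z² ∈ ℝ^d satisfy ‖z¹ − z²‖₂ ≤ 2β. If u is drawn uniformly from the cube [0, α)^d, then P(Q_{α,u}(z¹) = Q_{α,u}(z²)) ≥ 1 − ε. -/
/-!
The `j`-th coordinates of the two roundings differ exactly when the interval between
`z₁ j - u j` and `z₂ j - u j` contains a point of `αℤ`. Since `(0, α]` is a fundamental domain
of `αℤ`, the set of such shifts `u j ∈ [0, α)` has measure at most `|z₁ j - z₂ j|`, i.e. probability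
at most `|z₁ j - z₂ j| / α`. A union bound over the coordinates and Cauchy–Schwarz,
`‖z₁ - z₂‖₁ ≤ √d ‖z₁ - z₂‖₂ ≤ 2β√d = εα`, bound the probability of disagreement by `ε`.
-/

open MeasureTheory Finset

/-- Randomized grid rounding map: coordinatewise,
`(Q_{α,u}(z))_j = α·⌊(z_j − u_j)/α⌋ + u_j + α/2`. -/
noncomputable def gridRound {d : ℕ} (α : ℝ) (u z : Fin d → ℝ) : Fin d → ℝ :=
  fun j => α * (⌊(z j - u j) / α⌋ : ℤ) + u j + α / 2

open scoped Pointwise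

theorem setOf_floor_sub_div_ne_subset {α a b : ℝ} (hα : 0 < α) (hab : a ≤ b) :
    {t | ⌊(a - t) / α⌋ ≠ ⌊(b - t) / α⌋} ⊆
      ⋃ g : AddSubgroup.zmultiples α, g +ᵥ Set.Ioc a b := by
  intro t ht
  set k := ⌊(b - t) / α⌋
  have hlt : (a - t) / α < k :=
    Int.floor_lt.mp <| lt_of_le_of_ne (Int.floor_le_floor (by gcongr)) ht
  have hle : (k : ℝ) ≤ (b - t) / α := Int.floor_le _
  rw [div_lt_iff₀ hα] at hlt
  rw [le_div_iff₀ hα] at hle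
  refine Set.mem_iUnion.mpr ⟨⟨-(k • α), neg_mem (AddSubgroup.zsmul_mem_zmultiples α k)⟩, ?_⟩
  rw [Set.mem_vadd_set_iff_neg_vadd_mem]
  simp only [vadd_eq_add, AddSubgroup.vadd_def, AddSubgroup.coe_neg, neg_neg, zsmul_eq_mul,
    Set.mem_Ioc]
  constructor <;> linarith

theorem volume_Ico_inter_setOf_floor_sub_div_ne_le {α : ℝ} (hα : 0 < α) (a b : ℝ) :
    volume (Set.Ico 0 α ∩ {t | ⌊(a - t) / α⌋ ≠ ⌊(b - t) / α⌋}) ≤ ENNReal.ofReal |a - b| := by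
  wlog hab : a ≤ b generalizing a b
  · simpa only [ne_comm, abs_sub_comm] using this b a (le_of_not_ge hab)
  have hdom := isAddFundamentalDomain_Ioc hα 0
  rw [zero_add] at hdom
  calc volume (Set.Ico 0 α ∩ {t | ⌊(a - t) / α⌋ ≠ ⌊(b - t) / α⌋})
      = volume (Set.Ioc 0 α ∩ {t | ⌊(a - t) / α⌋ ≠ ⌊(b - t) / α⌋}) :=
        measure_congr (Ico_ae_eq_Ioc.inter (ae_eq_refl _))
    _ ≤ volume (⋃ g : AddSubgroup.zmultiples α, (g +ᵥ Set.Ioc a b) ∩ Set.Ioc 0 α) := by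
        rw [← Set.iUnion_inter, Set.inter_comm (Set.Ioc 0 α)]
        exact measure_mono (Set.inter_subset_inter_left _ (setOf_floor_sub_div_ne_subset hα hab))
    _ ≤ ∑' g : AddSubgroup.zmultiples α, volume ((g +ᵥ Set.Ioc a b) ∩ Set.Ioc 0 α) :=
        measure_iUnion_le _
    _ = volume (Set.Ioc a b) := (hdom.measure_eq_tsum _).symm
    _ = ENNReal.ofReal |a - b| := by
        rw [Real.volume_Ioc, abs_sub_comm, abs_of_nonneg (by linarith)]

theorem volume_mul_volume_pi_update {ι X : Type*} [Fintype ι] [DecidableEq ι] [MeasureSpace X]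
    [SigmaFinite (volume : Measure X)] (s t : Set X) (j : ι) :
    volume s * volume (Set.univ.pi (Function.update (fun _ => s) j t)) =
      volume t * volume (Set.univ.pi fun _ : ι => s) := by
  simp only [volume_pi_pi, Function.apply_update (fun _ => (volume : Measure X)),
    prod_update_of_mem (mem_univ j), ← mul_prod_erase univ (fun _ => volume s) (mem_univ j),
    sdiff_singleton_eq_erase]
  ring

theorem volume_mul_volume_iUnion_pi_update_le {ι X : Type*} [Fintype ι] [DecidableEq ι]
    [MeasureSpace X] [SigmaFinite (volume : Measure X)] (s : Set X) (t : ι → Set X) :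
    volume s * volume (⋃ j, Set.univ.pi (Function.update (fun _ => s) j (t j))) ≤
      (∑ j, volume (t j)) * volume (Set.univ.pi fun _ : ι => s) := by
  calc volume s * volume (⋃ j, Set.univ.pi (Function.update (fun _ => s) j (t j)))
      ≤ volume s * ∑ j, volume (Set.univ.pi (Function.update (fun _ => s) j (t j))) := by
        gcongr
        exact (measure_iUnion_le _).trans_eq (tsum_fintype _)
    _ = (∑ j, volume (t j)) * volume (Set.univ.pi fun _ : ι => s) := by
        simp only [mul_sum, sum_mul, volume_mul_volume_pi_update]

theorem exists_floor_ne_of_gridRound_ne {d : ℕ} {α : ℝ} {u z₁ z₂ : Fin d → ℝ}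
    (h : gridRound α u z₁ ≠ gridRound α u z₂) :
    ∃ j, ⌊(z₁ j - u j) / α⌋ ≠ ⌊(z₂ j - u j) / α⌋ := by
  contrapose! h
  funext j
  simp only [gridRound, h j]

theorem volume_setOf_gridRound_ne_le {d : ℕ} {α : ℝ} (hα : 0 < α) (z₁ z₂ : Fin d → ℝ) :
    ENNReal.ofReal α * volume {u ∈ Set.univ.pi fun _ : Fin d => Set.Ico (0 : ℝ) α |
        gridRound α u z₁ ≠ gridRound α u z₂} ≤
      ENNReal.ofReal (∑ j, |z₁ j - z₂ j|) *
        volume (Set.univ.pi fun _ : Fin d => Set.Ico (0 : ℝ) α) := by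
  set B : Fin d → Set ℝ := fun j => Set.Ico 0 α ∩ {t | ⌊(z₁ j - t) / α⌋ ≠ ⌊(z₂ j - t) / α⌋}
  have hcover : {u ∈ Set.univ.pi fun _ : Fin d => Set.Ico (0 : ℝ) α |
      gridRound α u z₁ ≠ gridRound α u z₂} ⊆
        ⋃ j, Set.univ.pi (Function.update (fun _ => Set.Ico 0 α) j (B j)) := by
    rintro u ⟨hu, hne⟩
    obtain ⟨j, hj⟩ := exists_floor_ne_of_gridRound_ne hne
    refine Set.mem_iUnion.mpr ⟨j, fun i _ => ?_⟩
    rcases eq_or_ne i j with rfl | hij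
    · rw [Function.update_self]
      exact ⟨hu i trivial, hj⟩
    · rw [Function.update_of_ne hij]
      exact hu i trivial
  calc _ ≤ volume (Set.Ico 0 α) *
        volume (⋃ j, Set.univ.pi (Function.update (fun _ => Set.Ico 0 α) j (B j))) := by
        rw [Real.volume_Ico, sub_zero]
        gcongr
    _ ≤ (∑ j, volume (B j)) * volume (Set.univ.pi fun _ : Fin d => Set.Ico (0 : ℝ) α) :=
        volume_mul_volume_iUnion_pi_update_le _ _
    _ ≤ _ := by
        rw [ENNReal.ofReal_sum_of_nonneg fun _ _ => abs_nonneg _]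
        gcongr with j
        exact volume_Ico_inter_setOf_floor_sub_div_ne_le hα _ _

theorem sum_abs_le_sqrt_card_mul_sqrt_sum_sq {ι : Type*} (s : Finset ι) (f : ι → ℝ) :
    ∑ i ∈ s, |f i| ≤ √(#s : ℝ) * √(∑ i ∈ s, f i ^ 2) := by
  rw [← Real.sqrt_mul (by positivity)]
  apply Real.le_sqrt_of_sq_le
  simpa only [sq_abs] using sq_sum_le_card_mul_sum_sq (s := s) (f := fun i => |f i|)

theorem ENNReal.ofReal_one_sub_le_div {a b : ENNReal} {ε : ℝ} (hε : 0 ≤ ε) (hb₀ : b ≠ 0)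
    (hb : b ≠ ⊤) (h : b ≤ a + ENNReal.ofReal ε * b) : ENNReal.ofReal (1 - ε) ≤ a / b := by
  rw [ENNReal.le_div_iff_mul_le (Or.inl hb₀) (Or.inl hb), ENNReal.ofReal_sub _ hε,
    ENNReal.ofReal_one, ENNReal.sub_mul fun _ _ => hb, one_mul, tsub_le_iff_right]
  exact h

theorem stmt_6 (d : ℕ) (hd : 1 ≤ d) (β ε : ℝ) (hβ : 0 < β)
    (hε : ε ∈ Set.Ioo (0 : ℝ) 1)
    (α : ℝ) (hα : α = 2 * β * Real.sqrt d / ε)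
    (z₁ z₂ : Fin d → ℝ)
    (hz : Real.sqrt (∑ j : Fin d, (z₁ j - z₂ j) ^ 2) ≤ 2 * β) :
    volume {u ∈ Set.univ.pi fun _ : Fin d => Set.Ico (0 : ℝ) α |
          gridRound α u z₁ = gridRound α u z₂}
        / volume (Set.univ.pi fun _ : Fin d => Set.Ico (0 : ℝ) α)
      ≥ ENNReal.ofReal (1 - ε) := by
  have hε₀ : 0 < ε := hε.1
  have hα₀ : 0 < α := by
    have : 0 < √(d : ℝ) := Real.sqrt_pos.mpr (by exact_mod_cast hd)
    rw [hα]
    positivity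
  have hl1 : ∑ j, |z₁ j - z₂ j| ≤ ε * α := calc
    _ ≤ √(d : ℝ) * √(∑ j, (z₁ j - z₂ j) ^ 2) := by
      simpa using sum_abs_le_sqrt_card_mul_sqrt_sum_sq univ fun j => z₁ j - z₂ j
    _ ≤ √(d : ℝ) * (2 * β) := by gcongr
    _ = ε * α := by rw [hα]; field_simp
  set cube := Set.univ.pi fun _ : Fin d => Set.Ico (0 : ℝ) α
  have hcube : volume cube = ENNReal.ofReal α ^ d := by simp [cube, volume_pi_pi]
  have hbad : volume {u ∈ cube | gridRound α u z₁ ≠ gridRound α u z₂} ≤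
      ENNReal.ofReal ε * volume cube := by
    rw [← ENNReal.mul_le_mul_iff_right (by simpa using hα₀) ENNReal.ofReal_ne_top]
    calc _ ≤ ENNReal.ofReal (∑ j, |z₁ j - z₂ j|) * volume cube :=
          volume_setOf_gridRound_ne_le hα₀ z₁ z₂
      _ ≤ ENNReal.ofReal (ε * α) * volume cube := by gcongr
      _ = _ := by rw [ENNReal.ofReal_mul hε₀.le]; ring
  refine ENNReal.ofReal_one_sub_le_div hε₀.le (by simp [hcube, hα₀]) (by simp [hcube]) ?_
  calc volume cube
      ≤ volume ({u ∈ cube | gridRound α u z₁ = gridRound α u z₂} ∪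
          {u ∈ cube | gridRound α u z₁ ≠ gridRound α u z₂}) :=
        measure_mono fun u hu => (em _).imp (⟨hu, ·⟩) (⟨hu, ·⟩)
    _ ≤ _ := (measure_union_le _ _).trans (by gcongr)
end

section
/- Let q ≥ 1 and let A, B be real symmetric positive definite d×d matrices with A ⪰ B and det(A) ≤ q·det(B). Then for every x ∈ ℝ^d, √(xᵀ B^{-1} x) ≤ √q · √(xᵀ A^{-1} x). -/
/-!
With `S = A^{1/2}`, the matrix `C = S B⁻¹ S` satisfies `1 ≤ C` because inversion is antitone in
the Loewner order, and `det C = det A / det B`. Every eigenvalue of `C` is at least `1`, so each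
one is at most their product `det C`; hence `C ≤ (det A / det B) • 1`, and conjugating back by
`S⁻¹` gives `B⁻¹ ≤ (det A / det B) • A⁻¹ ≤ q • A⁻¹`.
-/

open Matrix
open scoped MatrixOrder ComplexOrder

namespace Matrix

variable {n : Type*} [Fintype n] [DecidableEq n]

/-- Both Schur complements of `[[B⁻¹, 1], [1, A]]` decide whether it is positive semidefinite:
one is `A - B`, the other `B⁻¹ - A⁻¹`. -/
theorem PosDef.inv_le_inv {𝕜 : Type*} [RCLike 𝕜] {A B : Matrix n n 𝕜} (hA : A.PosDef)
    (hB : B.PosDef) (hBA : B ≤ A) : A⁻¹ ≤ B⁻¹ := by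
  have := hA.isUnit.invertible
  have := hB.isUnit.invertible
  have hM : (fromBlocks B⁻¹ 1 (1 : Matrix n n 𝕜)ᴴ A).PosSemidef := by
    rw [PosDef.fromBlocks₁₁ _ _ hB.inv, conjTranspose_one, one_mul, mul_one,
      inv_inv_of_invertible]
    exact hBA
  rwa [PosDef.fromBlocks₂₂ _ _ hA, conjTranspose_one, one_mul, mul_one] at hM

theorem IsHermitian.le_det_smul_one {C : Matrix n n ℝ} (hC : C.IsHermitian) (h1 : 1 ≤ C) :
    C ≤ C.det • 1 := by
  have hge : ∀ i, 1 ≤ hC.eigenvalues i := fun i =>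
    (algebraMap_le_iff_le_spectrum (r := (1 : ℝ)) hC).1 (by simpa using h1) _
      (hC.eigenvalues_mem_spectrum_real i)
  rw [← Algebra.algebraMap_eq_smul_one, le_algebraMap_iff_spectrum_le hC,
    hC.spectrum_real_eq_range_eigenvalues]
  rintro _ ⟨i, rfl⟩
  simp only [hC.det_eq_prod_eigenvalues, RCLike.ofReal_real_eq_id, id]
  rw [← Finset.mul_prod_erase _ _ (Finset.mem_univ i)]
  exact le_mul_of_one_le_right (by linarith [hge i]) (Finset.one_le_prod fun j _ => hge j)

theorem PosDef.inv_le_det_div_det_smul_inv {A B : Matrix n n ℝ} (hA : A.PosDef) (hB : B.PosDef)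
    (hBA : B ≤ A) : B⁻¹ ≤ (A.det / B.det) • A⁻¹ := by
  set S := CFC.sqrt A
  have hSS : S * S = A := CFC.sqrt_mul_sqrt_self A hA.posSemidef.nonneg
  have hS : star S = S := (CFC.sqrt_nonneg A).isSelfAdjoint
  have hS' : star S⁻¹ = S⁻¹ := by
    rw [star_eq_conjTranspose, conjTranspose_nonsing_inv, ← star_eq_conjTranspose, hS]
  have hSdet : IsUnit S.det :=
    isUnit_iff_ne_zero.2 fun h => hA.det_pos.ne' (by rw [← hSS, det_mul, h, zero_mul])
  have hSinvS : S⁻¹ * S = 1 := nonsing_inv_mul S hSdet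
  have hSSinv : S * S⁻¹ = 1 := mul_nonsing_inv S hSdet
  have hAinv : A⁻¹ = S⁻¹ * S⁻¹ := by rw [← hSS, mul_inv_rev]
  have hSAS : S * A⁻¹ * S = 1 := by
    rw [hAinv, mul_assoc S, mul_assoc, hSinvS, mul_one, hSSinv]
  set C := S * B⁻¹ * S
  have hC : C.IsHermitian := by
    have := hB.inv.isHermitian.isSelfAdjoint.conjugate' S
    rwa [hS] at this
  have hC1 : 1 ≤ C := by
    have := star_left_conjugate_le_conjugate (hA.inv_le_inv hB hBA) S
    rwa [hS, hSAS] at this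
  have hCdet : C.det = A.det / B.det := by
    rw [det_mul, det_mul, det_nonsing_inv, Ring.inverse_eq_inv, ← hSS, det_mul]
    ring
  calc B⁻¹ = star S⁻¹ * C * S⁻¹ := by
        rw [hS', mul_assoc, mul_assoc, hSSinv, mul_one, ← mul_assoc, hSinvS, one_mul]
    _ ≤ star S⁻¹ * (C.det • 1) * S⁻¹ :=
        star_left_conjugate_le_conjugate (hC.le_det_smul_one hC1) _
    _ = (A.det / B.det) • A⁻¹ := by
        rw [hS', hCdet, mul_smul_comm, mul_one, smul_mul_assoc, ← hAinv]

end Matrix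

theorem stmt_9_general (d : ℕ) (q : ℝ)
    (A B : Matrix (Fin d) (Fin d) ℝ)
    (hA : A.PosDef) (hB : B.PosDef) (hAB : (A - B).PosSemidef)
    (hdet : A.det ≤ q * B.det) :
    ∀ x : Fin d → ℝ,
      Real.sqrt (x ⬝ᵥ (B⁻¹ *ᵥ x))
        ≤ Real.sqrt q * Real.sqrt (x ⬝ᵥ (A⁻¹ *ᵥ x)) := by
  intro x
  have hinv : B⁻¹ ≤ q • A⁻¹ :=
    (hA.inv_le_det_div_det_smul_inv hB hAB).trans <| smul_le_smul_of_nonneg_right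
      ((div_le_iff₀ hB.det_pos).2 hdet) hA.inv.posSemidef.nonneg
  have hquad : x ⬝ᵥ (B⁻¹ *ᵥ x) ≤ q * (x ⬝ᵥ (A⁻¹ *ᵥ x)) := by
    simpa [sub_mulVec, smul_mulVec] using (le_iff.1 hinv).dotProduct_mulVec_nonneg x
  have hA_form : 0 ≤ x ⬝ᵥ (A⁻¹ *ᵥ x) := by
    simpa using hA.inv.posSemidef.dotProduct_mulVec_nonneg x
  calc Real.sqrt (x ⬝ᵥ (B⁻¹ *ᵥ x)) ≤ Real.sqrt (q * (x ⬝ᵥ (A⁻¹ *ᵥ x))) :=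
        Real.sqrt_le_sqrt hquad
    _ = Real.sqrt q * Real.sqrt (x ⬝ᵥ (A⁻¹ *ᵥ x)) := Real.sqrt_mul' q hA_form

theorem stmt_9 (d : ℕ) (q : ℝ) (hq : 1 ≤ q)
    (A B : Matrix (Fin d) (Fin d) ℝ)
    (hA : A.PosDef) (hB : B.PosDef) (hAB : (A - B).PosSemidef)
    (hdet : A.det ≤ q * B.det) :
    ∀ x : Fin d → ℝ,
      Real.sqrt (x ⬝ᵥ (B⁻¹ *ᵥ x))
        ≤ Real.sqrt q * Real.sqrt (x ⬝ᵥ (A⁻¹ *ᵥ x)) :=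
  stmt_9_general d q A B hA hB hAB hdet
end
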